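/- arXiv:1307.4649 — 6 statements merged into one kernel-verified Lean document; each statement's English description precedes it below -/
import Mathlib

section
/- For all x in an order unit space X with order unit e, Hopf's oscillation seminorm satisfies ||x||_H = 2 · inf_{λ ∈ R} ||x + λ e||_T, where ||·||_T is the Thompson (order unit) norm and ||x||_H = M(x/e) − m(x/e). -/
/-!
Translating `x` by `λ • e` shifts both `M(x/e)` and `m(x/e)` by `λ`, so the Thompson norm of
`x + λ • e` is `max (M + λ) (-(m + λ))`. This is at least the mean `(M - m) / 2` of its two
arguments, with equality at `λ = -(M + m) / 2`. The shift rule holds because `e` is interior and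
`-e ∉ C`, which make the sets defining `M` and `m` nonempty and bounded; if `-e ∈ C`, the cone is
the whole space and both sides vanish.
-/

open Set Filter Topology

section OrderUnit

variable {X : Type*} [AddCommGroup X] [Module ℝ X]

-- `maxRatio C e x` and `minRatio C e x` are the paper's `M(x/e)` and `m(x/e)`.
noncomputable def maxRatio (C : Set X) (e x : X) : ℝ := sInf {t : ℝ | t • e - x ∈ C}

noncomputable def minRatio (C : Set X) (e x : X) : ℝ := sSup {t : ℝ | x - t • e ∈ C}

theorem minRatio_eq_neg_maxRatio_neg (C : Set X) (e x : X) :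
    minRatio C e x = -maxRatio C e (-x) := by
  have hset : {t : ℝ | x - t • e ∈ C} = -{t : ℝ | t • e - -x ∈ C} := by
    ext t
    rw [Set.mem_neg, mem_ofPred_eq, mem_ofPred_eq, neg_smul, sub_neg_eq_add, neg_add_eq_sub]
  rw [minRatio, maxRatio, hset, ← neg_neg (sSup _), ← Real.sInf_neg, neg_neg]

theorem minRatio_univ (e x : X) : minRatio univ e x = 0 := by
  simp [minRatio]

theorem maxRatio_univ (e x : X) : maxRatio univ e x = 0 := by
  simp [maxRatio]

section Cone

variable {C : Set X} {e : X}

theorem add_mem_of_convex_of_smul_mem (hconv : Convex ℝ C)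
    (hcone : ∀ (a : ℝ) (x : X), 0 ≤ a → x ∈ C → a • x ∈ C) {a b : X} (ha : a ∈ C)
    (hb : b ∈ C) : a + b ∈ C := by
  have hmid := hconv ha hb (by norm_num : (0 : ℝ) ≤ 1 / 2) (by norm_num : (0 : ℝ) ≤ 1 / 2)
    (by norm_num)
  simpa [smul_add, smul_smul] using hcone 2 _ zero_le_two hmid

theorem nonneg_of_smul_mem (hcone : ∀ (a : ℝ) (x : X), 0 ≤ a → x ∈ C → a • x ∈ C)
    (hneg : -e ∉ C) {a : ℝ} (ha : a • e ∈ C) : 0 ≤ a := by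
  by_contra! ha_neg
  refine hneg ?_
  have := hcone (-a)⁻¹ _ (by simp [ha_neg.le]) ha
  rwa [smul_smul, inv_neg, neg_mul, inv_mul_cancel₀ ha_neg.ne, neg_smul, one_smul] at this

end Cone

section ConeInterior

variable {C : Set X} {e : X} [TopologicalSpace X] [IsTopologicalAddGroup X]
  [ContinuousSMul ℝ X]

theorem exists_smul_sub_mem (hcone : ∀ (a : ℝ) (x : X), 0 ≤ a → x ∈ C → a • x ∈ C)
    (he : e ∈ interior C) (y : X) : ∃ t : ℝ, t • e - y ∈ C := by
  have hlim : Tendsto (fun r : ℝ => e - r • y) (𝓝[>] 0) (𝓝 e) := by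
    have : Continuous (fun r : ℝ => e - r • y) := by fun_prop
    simpa using (this.tendsto 0).mono_left nhdsWithin_le_nhds
  obtain ⟨r, hr_mem, hr_pos⟩ :=
    ((hlim.eventually (isOpen_interior.mem_nhds he)).and self_mem_nhdsWithin).exists
  refine ⟨r⁻¹, ?_⟩
  have := hcone r⁻¹ _ (inv_nonneg.2 (le_of_lt hr_pos)) (interior_subset hr_mem)
  rwa [smul_sub, smul_smul, inv_mul_cancel₀ (ne_of_gt hr_pos), one_smul] at this

theorem bddBelow_setOf_smul_sub_mem (hconv : Convex ℝ C)
    (hcone : ∀ (a : ℝ) (x : X), 0 ≤ a → x ∈ C → a • x ∈ C) (he : e ∈ interior C)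
    (hneg : -e ∉ C) (x : X) : BddBelow {t : ℝ | t • e - x ∈ C} := by
  obtain ⟨s, hs⟩ := exists_smul_sub_mem hcone he (-x)
  refine ⟨-s, fun t ht => ?_⟩
  have hsum : (t - -s) • e ∈ C := by
    have := add_mem_of_convex_of_smul_mem hconv hcone ht hs
    rwa [show t • e - x + (s • e - -x) = (t - -s) • e by module] at this
  linarith [nonneg_of_smul_mem hcone hneg hsum]

theorem maxRatio_add_smul (hconv : Convex ℝ C)
    (hcone : ∀ (a : ℝ) (x : X), 0 ≤ a → x ∈ C → a • x ∈ C) (he : e ∈ interior C)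
    (hneg : -e ∉ C) (x : X) (c : ℝ) : maxRatio C e (x + c • e) = maxRatio C e x + c := by
  have hshift : {t : ℝ | t • e - (x + c • e) ∈ C} = (· + c) '' {t : ℝ | t • e - x ∈ C} := by
    rw [Set.image_add_right]
    ext t
    rw [mem_ofPred_eq, mem_preimage, mem_ofPred_eq,
      show t • e - (x + c • e) = (t + -c) • e - x by module]
  rw [maxRatio, maxRatio, hshift]
  exact ((OrderIso.addRight c).map_csInf' (exists_smul_sub_mem hcone he x)
    (bddBelow_setOf_smul_sub_mem hconv hcone he hneg x)).symm

theorem minRatio_add_smul (hconv : Convex ℝ C)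
    (hcone : ∀ (a : ℝ) (x : X), 0 ≤ a → x ∈ C → a • x ∈ C) (he : e ∈ interior C)
    (hneg : -e ∉ C) (x : X) (c : ℝ) : minRatio C e (x + c • e) = minRatio C e x + c := by
  rw [minRatio_eq_neg_maxRatio_neg, minRatio_eq_neg_maxRatio_neg,
    show -(x + c • e) = -x + (-c) • e by module, maxRatio_add_smul hconv hcone he hneg]
  ring

theorem eq_univ_of_neg_mem (hconv : Convex ℝ C)
    (hcone : ∀ (a : ℝ) (x : X), 0 ≤ a → x ∈ C → a • x ∈ C) (he : e ∈ interior C)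
    (hneg : -e ∈ C) : C = univ := by
  refine eq_univ_of_forall fun y => ?_
  obtain ⟨t, ht⟩ := exists_smul_sub_mem hcone he (-y)
  have hte : (-t) • e ∈ C := by
    rcases le_total 0 t with h | h
    · simpa using hcone t _ h hneg
    · exact hcone (-t) e (neg_nonneg.2 h) (interior_subset he)
  simpa using add_mem_of_convex_of_smul_mem hconv hcone ht hte

end ConeInterior

end OrderUnit

theorem iInf_max_add_neg_add (a b : ℝ) : ⨅ c : ℝ, max (a + c) (-(b + c)) = (a - b) / 2 := by
  have hlower (c : ℝ) : (a - b) / 2 ≤ max (a + c) (-(b + c)) := by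
    linarith [le_max_left (a + c) (-(b + c)), le_max_right (a + c) (-(b + c))]
  refine le_antisymm ?_ (le_ciInf hlower)
  calc ⨅ c : ℝ, max (a + c) (-(b + c))
      ≤ max (a + -((a + b) / 2)) (-(b + -((a + b) / 2))) :=
        ciInf_le ⟨_, forall_mem_range.2 hlower⟩ _
    _ = (a - b) / 2 := by rw [show a + -((a + b) / 2) = (a - b) / 2 by ring,
        show -(b + -((a + b) / 2)) = (a - b) / 2 by ring, max_self]

theorem stmt4_general {X : Type*} [NormedAddCommGroup X] [NormedSpace ℝ X]
    (C : Set X) (hconv : Convex ℝ C)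
    (hcone : ∀ (a : ℝ) (x : X), 0 ≤ a → x ∈ C → a • x ∈ C)
    (e : X) (he : e ∈ interior C) (x : X) :
    sInf {t : ℝ | t • e - x ∈ C} - sSup {t : ℝ | x - t • e ∈ C}
      = 2 * ⨅ lam : ℝ,
          max (sInf {t : ℝ | t • e - (x + lam • e) ∈ C})
              (-(sSup {t : ℝ | (x + lam • e) - t • e ∈ C})) := by
  change maxRatio C e x - minRatio C e x
    = 2 * ⨅ lam : ℝ, max (maxRatio C e (x + lam • e)) (-minRatio C e (x + lam • e))
  by_cases hneg : -e ∈ C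
  · obtain rfl := eq_univ_of_neg_mem hconv hcone he hneg
    simp only [maxRatio_univ, minRatio_univ, neg_zero, max_self, ciInf_const]
    ring
  · simp only [maxRatio_add_smul hconv hcone he hneg, minRatio_add_smul hconv hcone he hneg,
      iInf_max_add_neg_add]
    ring

/-- In an order unit space, Hopf's oscillation seminorm equals twice the quotient norm
of the Thompson norm modulo the line spanned by the unit. -/
theorem stmt4 {X : Type*} [NormedAddCommGroup X] [NormedSpace ℝ X] [CompleteSpace X]
    (C : Set X) (hclosed : IsClosed C) (hconv : Convex ℝ C)
    (hcone : ∀ (a : ℝ) (x : X), 0 ≤ a → x ∈ C → a • x ∈ C)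
    (hpointed : ∀ x : X, x ∈ C → -x ∈ C → x = 0)
    (hnormal : ∃ K > (0 : ℝ), ∀ x y : X, x ∈ C → y - x ∈ C → ‖x‖ ≤ K * ‖y‖)
    (e : X) (he : e ∈ interior C) (x : X) :
    sInf {t : ℝ | t • e - x ∈ C} - sSup {t : ℝ | x - t • e ∈ C}
      = 2 * ⨅ lam : ℝ,
          max (sInf {t : ℝ | t • e - (x + lam • e) ∈ C})
              (-(sSup {t : ℝ | (x + lam • e) - t • e ∈ C})) :=
  stmt4_general C hconv hcone e he x
end

section
/- Let ν, π be elements of the abstract simplex P(e) = {μ ∈ C* : ⟨μ,e⟩ = 1}. Then ν ⊥ π (i.e., the only μ ∈ P(e) with μ ⪰ ν/2 and μ ⪰ π/2 is μ = (ν+π)/2) if and only if the only ρ, σ ∈ P(e) with ν − π = ρ − σ are ρ = ν and σ = π. -/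
/-! The two conditions are exchanged by the substitution `ρ = 2μ - π`, `σ = 2μ - ν`:
`ν - π = ρ - σ` says exactly that `ρ + π = ν + σ = 2μ`, and a `μ` in the simplex lies above
`ν/2` and `π/2` precisely when `2μ - ν` and `2μ - π` lie in the simplex. -/

section AbstractSimplex

variable {𝕜 E : Type*} [Field 𝕜] [AddCommGroup E] [Module 𝕜 E] {K : Set E} {ℓ : E →ₗ[𝕜] 𝕜}

def abstractSimplex (K : Set E) (ℓ : E →ₗ[𝕜] 𝕜) : Set E := {μ | μ ∈ K ∧ ℓ μ = 1}

def SimplexDisjoint (K : Set E) (ℓ : E →ₗ[𝕜] 𝕜) (ν π : E) : Prop :=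
  ∀ μ ∈ abstractSimplex K ℓ, (2 : 𝕜) • μ - ν ∈ K → (2 : 𝕜) • μ - π ∈ K →
    μ = (2 : 𝕜)⁻¹ • (ν + π)

theorem half_smul_add_mem_abstractSimplex [LinearOrder 𝕜] [IsStrictOrderedRing 𝕜]
    (hK : Convex 𝕜 K) {ν σ : E} (hν : ν ∈ abstractSimplex K ℓ)
    (hσ : σ ∈ abstractSimplex K ℓ) :
    (2 : 𝕜)⁻¹ • (ν + σ) ∈ abstractSimplex K ℓ := by
  refine ⟨?_, ?_⟩
  · rw [smul_add]
    exact hK hν.1 hσ.1 (by positivity) (by positivity) (by norm_num)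
  · rw [map_smul, map_add, hν.2, hσ.2, smul_eq_mul]
    norm_num

theorem two_smul_sub_mem_abstractSimplex {μ ν : E} (hμ : ℓ μ = 1) (hν : ℓ ν = 1)
    (h : (2 : 𝕜) • μ - ν ∈ K) : (2 : 𝕜) • μ - ν ∈ abstractSimplex K ℓ := by
  refine ⟨h, ?_⟩
  rw [map_sub, map_smul, hμ, hν, smul_eq_mul]
  norm_num

theorem SimplexDisjoint.eq_of_sub_eq_sub [LinearOrder 𝕜] [IsStrictOrderedRing 𝕜]
    (hK : Convex 𝕜 K) {ν π ρ σ : E} (hdisj : SimplexDisjoint K ℓ ν π)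
    (hν : ν ∈ abstractSimplex K ℓ) (hρ : ρ ∈ abstractSimplex K ℓ)
    (hσ : σ ∈ abstractSimplex K ℓ) (heq : ν - π = ρ - σ) :
    ρ = ν ∧ σ = π := by
  have hsum : ν + σ = ρ + π := sub_eq_sub_iff_add_eq_add.mp heq
  set μ := (2 : 𝕜)⁻¹ • (ν + σ)
  have h2μ : (2 : 𝕜) • μ = ν + σ := smul_inv_smul₀ two_ne_zero _
  have hμν : (2 : 𝕜) • μ - ν = σ := by rw [h2μ, add_sub_cancel_left]
  have hμπ : (2 : 𝕜) • μ - π = ρ := by rw [h2μ, hsum, add_sub_cancel_right]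
  have hμ := hdisj μ (half_smul_add_mem_abstractSimplex hK hν hσ)
    (hμν ▸ hσ.1) (hμπ ▸ hρ.1)
  have hσπ : σ = π := by
    simpa only [μ, (smul_right_injective E (inv_ne_zero (two_ne_zero' 𝕜))).eq_iff,
      add_right_inj] using hμ
  exact ⟨by rwa [hσπ, sub_left_inj, eq_comm] at heq, hσπ⟩

theorem simplexDisjoint_of_sub_eq_sub_unique [NeZero (2 : 𝕜)] {ν π : E}
    (hν : ℓ ν = 1) (hπ : ℓ π = 1)
    (huniq : ∀ ρ ∈ abstractSimplex K ℓ, ∀ σ ∈ abstractSimplex K ℓ,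
      ν - π = ρ - σ → ρ = ν ∧ σ = π) :
    SimplexDisjoint K ℓ ν π := by
  intro μ hμ hμν hμπ
  have hdiff : ν - π = ((2 : 𝕜) • μ - π) - ((2 : 𝕜) • μ - ν) := by abel
  obtain ⟨hρν, -⟩ := huniq _ (two_smul_sub_mem_abstractSimplex hμ.2 hπ hμπ)
    _ (two_smul_sub_mem_abstractSimplex hμ.2 hν hμν) hdiff
  rw [eq_inv_smul_iff₀ two_ne_zero, ← hρν, sub_add_cancel]

theorem simplexDisjoint_iff_sub_eq_sub_unique [LinearOrder 𝕜] [IsStrictOrderedRing 𝕜]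
    (hK : Convex 𝕜 K) {ν π : E} (hν : ν ∈ abstractSimplex K ℓ)
    (hπ : π ∈ abstractSimplex K ℓ) :
    SimplexDisjoint K ℓ ν π ↔ ∀ ρ ∈ abstractSimplex K ℓ, ∀ σ ∈ abstractSimplex K ℓ,
      ν - π = ρ - σ → ρ = ν ∧ σ = π :=
  ⟨fun hdisj _ hρ _ hσ heq => hdisj.eq_of_sub_eq_sub hK hν hρ hσ heq,
    simplexDisjoint_of_sub_eq_sub_unique hν.2 hπ.2⟩

end AbstractSimplex

theorem convex_setOf_forall_nonneg_apply {X : Type*} [NormedAddCommGroup X]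
    [NormedSpace ℝ X] (C : Set X) : Convex ℝ {μ : X →L[ℝ] ℝ | ∀ x ∈ C, 0 ≤ μ x} := by
  intro μ hμ ν hν a b ha hb _ x hx
  simp only [add_apply, smul_apply, smul_eq_mul]
  have := hμ x hx
  have := hν x hx
  positivity

theorem stmt8_general {X : Type*} [NormedAddCommGroup X] [NormedSpace ℝ X]
    (C : Set X)
    (e : X)
    (P : Set (X →L[ℝ] ℝ))
    (hP : P = {μ : X →L[ℝ] ℝ | (∀ x ∈ C, 0 ≤ μ x) ∧ μ e = 1})
    (ν π : X →L[ℝ] ℝ) (hν : ν ∈ P) (hπ : π ∈ P) :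
    ((∀ μ ∈ P, (∀ x ∈ C, 0 ≤ ((2 : ℝ) • μ - ν) x) →
        (∀ x ∈ C, 0 ≤ ((2 : ℝ) • μ - π) x) → μ = (2 : ℝ)⁻¹ • (ν + π))
      ↔ (∀ ρ ∈ P, ∀ σ ∈ P, ν - π = ρ - σ → ρ = ν ∧ σ = π)) := by
  subst hP
  exact simplexDisjoint_iff_sub_eq_sub_unique
    (ℓ := (ContinuousLinearMap.apply ℝ ℝ e).toLinearMap)
    (convex_setOf_forall_nonneg_apply C) hν hπ

/-- Characterization of disjointness in the abstract simplex: `ν ⊥ π` iff the only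
representation of `ν - π` as a difference of elements of the simplex is `(ν, π)`. -/
theorem stmt8 {X : Type*} [NormedAddCommGroup X] [NormedSpace ℝ X] [CompleteSpace X]
    (C : Set X) (hclosed : IsClosed C) (hconv : Convex ℝ C)
    (hcone : ∀ (a : ℝ) (x : X), 0 ≤ a → x ∈ C → a • x ∈ C)
    (hpointed : ∀ x : X, x ∈ C → -x ∈ C → x = 0)
    (e : X) (he : e ∈ interior C)
    (P : Set (X →L[ℝ] ℝ))
    (hP : P = {μ : X →L[ℝ] ℝ | (∀ x ∈ C, 0 ≤ μ x) ∧ μ e = 1})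
    (ν π : X →L[ℝ] ℝ) (hν : ν ∈ P) (hπ : π ∈ P) :
    ((∀ μ ∈ P, (∀ x ∈ C, 0 ≤ ((2 : ℝ) • μ - ν) x) →
        (∀ x ∈ C, 0 ≤ ((2 : ℝ) • μ - π) x) → μ = (2 : ℝ)⁻¹ • (ν + π))
      ↔ (∀ ρ ∈ P, ∀ σ ∈ P, ν - π = ρ - σ → ρ = ν ∧ σ = π)) :=
  stmt8_general C e P hP ν π hν hπ
end

section
/- The extreme points of the set {ν − π : ν, π probability vectors in R^n} (the unit ball B of the dual of the diameter seminorm, up to normalization) are exactly the vectors e_i − e_j with i ≠ j, where e_i are the standard basis vectors. -/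
/-!
Write `B = Δ - Δ` for the standard simplex `Δ = conv {e_i}`. Since taking convex hulls commutes
with Minkowski differences, `B = conv {e_i - e_j}`, so every extreme point of `B` is some
`e_i - e_j`. The point `e_i - e_i = 0` is the midpoint of `e_i - e_j` and `e_j - e_i`, hence not
extreme. Conversely, for `i ≠ j` the functional `z ↦ z i - z j` is at most `2` on `B` and
attains `2` only at `e_i - e_j`, which is therefore an exposed point.
-/

open Set Pointwise

section StdSimplex

variable {𝕜 ι : Type*} [Field 𝕜] [LinearOrder 𝕜] [IsStrictOrderedRing 𝕜] [Fintype ι]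
  [DecidableEq ι]

theorem eq_single_of_mem_stdSimplex_of_one_le {x : ι → 𝕜} (hx : x ∈ stdSimplex 𝕜 ι)
    {i : ι} (hi : 1 ≤ x i) : x = Pi.single i 1 := by
  have hrest : ∑ k ∈ Finset.univ.erase i, x k = 0 := by
    refine le_antisymm ?_ (Finset.sum_nonneg fun k _ => hx.1 k)
    rw [Finset.sum_erase_eq_sub (Finset.mem_univ i), hx.2]
    linarith
  funext k
  rcases eq_or_ne k i with rfl | hk
  · simpa using le_antisymm (mem_Icc_of_mem_stdSimplex hx k).2 hi
  · rw [Pi.single_eq_of_ne hk]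
    exact (Finset.sum_eq_zero_iff_of_nonneg (fun m _ => hx.1 m)).1 hrest k
      (Finset.mem_erase.2 ⟨hk, Finset.mem_univ k⟩)

theorem stdSimplex_sub_stdSimplex_eq_convexHull :
    stdSimplex 𝕜 ι - stdSimplex 𝕜 ι =
      convexHull 𝕜
        (range (fun i : ι => Pi.single i (1 : 𝕜)) - range fun i => Pi.single i 1) := by
  rw [convexHull_sub, convexHull_rangle_single_eq_stdSimplex]

end StdSimplex

theorem zero_notMem_extremePoints_sub_self {𝕜 E : Type*} [Field 𝕜] [LinearOrder 𝕜]
    [IsStrictOrderedRing 𝕜] [AddCommGroup E] [Module 𝕜 E] {S : Set E} {x : E}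
    (hx : x ∈ S - S) (hx0 : x ≠ 0) : (0 : E) ∉ (S - S).extremePoints 𝕜 := by
  intro h0
  have hnegx : -x ∈ S - S := by
    obtain ⟨a, ha, b, hb, rfl⟩ := hx
    exact ⟨b, hb, a, ha, (neg_sub a b).symm⟩
  have hmid : (0 : E) ∈ openSegment 𝕜 x (-x) :=
    ⟨1 / 2, 1 / 2, by norm_num, by norm_num, by norm_num, by module⟩
  exact hx0 (h0.2 hx hnegx hmid)

section Real

variable {ι : Type*} [Fintype ι] [DecidableEq ι]

theorem single_sub_single_mem_exposedPoints {i j : ι} (hij : i ≠ j) :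
    Pi.single i 1 - Pi.single j 1 ∈
      (stdSimplex ℝ ι - stdSimplex ℝ ι).exposedPoints ℝ := by
  refine ⟨⟨_, single_mem_stdSimplex ℝ i, _, single_mem_stdSimplex ℝ j, rfl⟩,
    .proj (R := ℝ) (φ := fun _ : ι => ℝ) i - .proj j, ?_⟩
  rintro _ ⟨ν, hν, π, hπ, rfl⟩
  have hνi := (mem_Icc_of_mem_stdSimplex hν i).2
  have hπi := hπ.1 i
  have hνj := hν.1 j
  have hπj := (mem_Icc_of_mem_stdSimplex hπ j).2
  simp only [sub_apply, ContinuousLinearMap.proj_apply, Pi.sub_apply,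
    Pi.single_eq_same, Pi.single_eq_of_ne hij, Pi.single_eq_of_ne hij.symm]
  refine ⟨by linarith, fun h => ?_⟩
  rw [eq_single_of_mem_stdSimplex_of_one_le hν (i := i) (by linarith),
    eq_single_of_mem_stdSimplex_of_one_le hπ (i := j) (by linarith)]

theorem extremePoints_stdSimplex_sub_stdSimplex [Nontrivial ι] :
    (stdSimplex ℝ ι - stdSimplex ℝ ι).extremePoints ℝ =
      {z | ∃ i j : ι, i ≠ j ∧ z = Pi.single i 1 - Pi.single j 1} := by
  refine Subset.antisymm (fun z hz => ?_) ?_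
  · rw [stdSimplex_sub_stdSimplex_eq_convexHull] at hz
    obtain ⟨_, ⟨i, rfl⟩, _, ⟨j, rfl⟩, rfl⟩ := extremePoints_convexHull_subset hz
    refine ⟨i, j, fun hij => ?_, rfl⟩
    subst hij
    obtain ⟨a, b, hab⟩ := exists_pair_ne ι
    have hne : (Pi.single a 1 - Pi.single b 1 : ι → ℝ) ≠ 0 := by
      rw [Ne, sub_eq_zero]
      intro h
      simpa [hab] using congrFun h a
    refine zero_notMem_extremePoints_sub_self (𝕜 := ℝ)
      ⟨_, single_mem_stdSimplex ℝ a, _, single_mem_stdSimplex ℝ b, rfl⟩ hne ?_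
    rw [stdSimplex_sub_stdSimplex_eq_convexHull]
    simpa only [sub_self] using hz
  · rintro _ ⟨i, j, hij, rfl⟩
    exact exposedPoints_subset_extremePoints (single_sub_single_mem_exposedPoints hij)

end Real

/-- The extreme points of `P - P` (P the standard simplex) are the vectors
`e_i - e_j` with `i ≠ j`. -/
theorem stmt12 (n : ℕ) (hn : 2 ≤ n) :
    Set.extremePoints ℝ
        {z : Fin n → ℝ | ∃ ν π : Fin n → ℝ,
          ((∀ i, 0 ≤ ν i) ∧ ∑ i, ν i = 1) ∧
          ((∀ i, 0 ≤ π i) ∧ ∑ i, π i = 1) ∧ z = ν - π}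
      = {z : Fin n → ℝ | ∃ i j : Fin n, i ≠ j ∧
          z = Pi.single i (1 : ℝ) - Pi.single j 1} := by
  have : Nontrivial (Fin n) := Fin.nontrivial_iff_two_le.2 hn
  convert extremePoints_stdSimplex_sub_stdSimplex (ι := Fin n) using 2
  ext z
  exact ⟨fun ⟨ν, π, hν, hπ, hz⟩ => ⟨ν, hν, π, hπ, hz.symm⟩,
    fun ⟨ν, hν, π, hπ, hz⟩ => ⟨ν, π, hν, hπ, hz.symm⟩⟩
end

section
/- For a row-stochastic n×n matrix A, the contraction rate of x ↦ Ax with respect to the diameter seminorm, sup{Δ(Ax)/Δ(x) : Δ(x) ≠ 0}, equals the Doeblin coefficient (1/2)·max_{i<j} Σ_s |A_{is} − A_{js}|. -/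
/-!
The difference `(Ax)ᵢ - (Ax)ⱼ` is `∑ₖ aₖ xₖ` with `a = Aᵢ - Aⱼ`, a vector of zero sum because
the rows of `A` have equal sums. For such `a`, shifting `x` by its minimum shows
`∑ₖ aₖ xₖ ≤ (½ ∑ₖ |aₖ|) Δ(x)`, and the 0–1 indicator of `{a > 0}` attains equality. Taking for
`a` the difference of the two rows that realise the Doeblin coefficient gives a vector `x` with
`Δ(x) = 1` on which the bound is attained, so the supremum of the ratios is a maximum.
-/

open Finset Matrix

noncomputable def diamSeminorm {ι : Type*} (x : ι → ℝ) : ℝ :=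
  ⨆ p : ι × ι, x p.1 - x p.2

namespace diamSeminorm

variable {ι : Type*}

lemma sub_le [Finite ι] (x : ι → ℝ) (i j : ι) : x i - x j ≤ diamSeminorm x :=
  le_ciSup (f := fun p : ι × ι => x p.1 - x p.2) (Set.finite_range _).bddAbove (i, j)

lemma le_of_forall_sub_le [Nonempty ι] {x : ι → ℝ} {c : ℝ} (h : ∀ i j, x i - x j ≤ c) :
    diamSeminorm x ≤ c :=
  ciSup_le fun p => h p.1 p.2

lemma nonneg [Finite ι] [Nonempty ι] (x : ι → ℝ) : 0 ≤ diamSeminorm x := by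
  obtain ⟨i⟩ := ‹Nonempty ι›
  simpa using sub_le x i i

lemma eq_one_of_mem_Icc [Finite ι] {x : ι → ℝ} (hx : ∀ k, x k ∈ Set.Icc 0 1) {p q : ι}
    (hp : x p = 1) (hq : x q = 0) : diamSeminorm x = 1 := by
  have : Nonempty ι := ⟨p⟩
  refine le_antisymm (le_of_forall_sub_le fun i j => ?_) ?_
  · linarith [(hx i).2, (hx j).1]
  · simpa [hp, hq] using sub_le x p q

end diamSeminorm

section ZeroSum

variable {ι : Type*} [Fintype ι] {a : ι → ℝ}

lemma sum_posPart_eq_half_sum_abs (ha : ∑ k, a k = 0) : ∑ k, (a k)⁺ = (∑ k, |a k|) / 2 := by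
  have h2 : ∀ k, 2 * (a k)⁺ = |a k| + a k := fun k => by
    linarith [posPart_add_negPart (a k), posPart_sub_negPart (a k)]
  have := sum_congr rfl fun k (_ : k ∈ univ) => h2 k
  simp only [← mul_sum, sum_add_distrib, ha] at this
  linarith

/-- Since `∑ a = 0`, the sum `∑ a x` is unchanged when `x` is shifted by its minimum,
and then only the positive parts of `a` can contribute. -/
lemma sum_mul_le_half_sum_abs_mul_diamSeminorm [Nonempty ι] (ha : ∑ k, a k = 0)
    (x : ι → ℝ) : ∑ k, a k * x k ≤ (∑ k, |a k|) / 2 * diamSeminorm x := by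
  obtain ⟨m, hm⟩ := Finite.exists_min x
  have hshift : ∑ k, a k * x k = ∑ k, a k * (x k - x m) := by
    simp only [mul_sub, sum_sub_distrib, ← sum_mul, ha, zero_mul, sub_zero]
  calc ∑ k, a k * x k = ∑ k, a k * (x k - x m) := hshift
    _ ≤ ∑ k, (a k)⁺ * diamSeminorm x := sum_le_sum fun k _ => by
        have h0 : 0 ≤ x k - x m := sub_nonneg.mpr (hm k)
        calc a k * (x k - x m) ≤ (a k)⁺ * (x k - x m) :=
              mul_le_mul_of_nonneg_right (le_posPart _) h0
          _ ≤ (a k)⁺ * diamSeminorm x :=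
              mul_le_mul_of_nonneg_left (diamSeminorm.sub_le x k m) (posPart_nonneg _)
    _ = (∑ k, |a k|) / 2 * diamSeminorm x := by
        rw [← sum_mul, sum_posPart_eq_half_sum_abs ha]

lemma exists_diamSeminorm_eq_one_and_sum_mul_eq [Nontrivial ι] (ha : ∑ k, a k = 0) :
    ∃ x : ι → ℝ, diamSeminorm x = 1 ∧ ∑ k, a k * x k = (∑ k, |a k|) / 2 := by
  by_cases hpos : ∃ p, 0 < a p
  · obtain ⟨p, hp⟩ := hpos
    obtain ⟨q, hq⟩ : ∃ q, a q ≤ 0 := by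
      by_contra! h
      linarith [sum_pos (fun k _ => h k) univ_nonempty]
    refine ⟨fun k => if 0 < a k then 1 else 0,
      diamSeminorm.eq_one_of_mem_Icc (fun k => by by_cases h : 0 < a k <;> simp [h]) (if_pos hp)
        (if_neg hq.not_gt), ?_⟩
    rw [← sum_posPart_eq_half_sum_abs ha]
    refine sum_congr rfl fun k _ => ?_
    by_cases h : 0 < a k
    · simp only [h, if_true, mul_one, posPart_eq_self.mpr h.le]
    · simp only [h, if_false, mul_zero, posPart_eq_zero.mpr (not_lt.mp h)]
  · classical
    push Not at hpos
    have hzero : ∀ k, a k = 0 := fun k =>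
      (sum_eq_zero_iff_of_nonpos fun k _ => hpos k).mp ha k (mem_univ k)
    obtain ⟨p, q, hpq⟩ := exists_pair_ne ι
    refine ⟨Pi.single p 1,
      diamSeminorm.eq_one_of_mem_Icc (fun k => ?_) (Pi.single_eq_same p 1)
        (Pi.single_eq_of_ne hpq.symm 1),
      by simp [hzero]⟩
    by_cases hk : k = p <;> simp [hk]

end ZeroSum

section Matrix

variable {κ ι : Type*} [Fintype ι] (A : Matrix κ ι ℝ)

lemma Matrix.mulVec_sub_mulVec (x : ι → ℝ) (i j : κ) :
    (A *ᵥ x) i - (A *ᵥ x) j = ∑ k, (A i k - A j k) * x k := by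
  simp only [mulVec, dotProduct, ← sum_sub_distrib, sub_mul]

lemma diamSeminorm_mulVec_le [Nonempty κ] [Nonempty ι]
    (hrow : ∀ i j, ∑ k, A i k = ∑ k, A j k) {c : ℝ}
    (hc : ∀ i j, ∑ k, |A i k - A j k| ≤ c) (x : ι → ℝ) :
    diamSeminorm (A *ᵥ x) ≤ c / 2 * diamSeminorm x := by
  refine diamSeminorm.le_of_forall_sub_le fun i j => ?_
  have hsum : ∑ k, (A i k - A j k) = 0 := by rw [sum_sub_distrib, hrow, sub_self]
  rw [A.mulVec_sub_mulVec]
  calc ∑ k, (A i k - A j k) * x k ≤ (∑ k, |A i k - A j k|) / 2 * diamSeminorm x :=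
        sum_mul_le_half_sum_abs_mul_diamSeminorm hsum x
    _ ≤ c / 2 * diamSeminorm x := by
        gcongr
        · exact diamSeminorm.nonneg x
        · exact hc i j

end Matrix

lemma sSup_diamSeminorm_div_eq {ι κ : Type*} [Finite ι] [Nonempty ι]
    (f : (ι → ℝ) → κ → ℝ) {c : ℝ} (hle : ∀ x, diamSeminorm (f x) ≤ c * diamSeminorm x)
    {x₀ : ι → ℝ} (hx₀ : diamSeminorm x₀ = 1) (hfx₀ : c ≤ diamSeminorm (f x₀)) :
    sSup {r : ℝ | ∃ x, diamSeminorm x ≠ 0 ∧ r = diamSeminorm (f x) / diamSeminorm x} = c := by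
  refine IsGreatest.csSup_eq ⟨⟨x₀, by simp [hx₀], ?_⟩, ?_⟩
  · rw [hx₀, div_one]
    exact hfx₀.antisymm (by simpa [hx₀] using hle x₀)
  · rintro r ⟨x, hx, rfl⟩
    exact (div_le_iff₀ ((diamSeminorm.nonneg x).lt_of_ne hx.symm)).mpr (hle x)

lemma isGreatest_range_sSup_pairs_lt {ι : Type*} [LinearOrder ι] [Finite ι] [Nontrivial ι]
    (f : ι → ι → ℝ) (hsymm : ∀ i j, f i j = f j i) (hdiag : ∀ i j k, f i i ≤ f j k) :
    IsGreatest (Set.range fun p : ι × ι => f p.1 p.2)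
      (sSup {s : ℝ | ∃ i j : ι, i < j ∧ s = f i j}) := by
  set T := {s : ℝ | ∃ i j : ι, i < j ∧ s = f i j}
  have hTfin : T.Finite := (Set.finite_range fun p : ι × ι => f p.1 p.2).subset
    (by rintro s ⟨i, j, -, rfl⟩; exact ⟨(i, j), rfl⟩)
  have hTne : T.Nonempty := by
    obtain ⟨i, j, hij⟩ := exists_pair_ne ι
    rcases hij.lt_or_gt with h | h
    · exact ⟨_, i, j, h, rfl⟩
    · exact ⟨_, j, i, h, rfl⟩
  obtain ⟨i₀, j₀, -, hM⟩ := hTne.csSup_mem hTfin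
  have hle : ∀ i j, i < j → f i j ≤ sSup T := fun i j h => le_csSup hTfin.bddAbove ⟨i, j, h, rfl⟩
  refine ⟨⟨(i₀, j₀), hM.symm⟩, ?_⟩
  rintro s ⟨⟨i, j⟩, rfl⟩
  rcases lt_trichotomy i j with h | rfl | h
  · exact hle i j h
  · rw [hM]
    exact hdiag i i₀ j₀
  · simpa only [hsymm i j] using hle j i h

theorem stmt13_general (n : ℕ) (hn : 2 ≤ n) (A : Matrix (Fin n) (Fin n) ℝ)
    (hrow : ∀ i, ∑ j, A i j = 1) :
    sSup {r : ℝ | ∃ x : Fin n → ℝ,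
        (⨆ p : Fin n × Fin n, (x p.1 - x p.2)) ≠ 0 ∧
        r = (⨆ p : Fin n × Fin n, (A.mulVec x p.1 - A.mulVec x p.2)) /
            (⨆ p : Fin n × Fin n, (x p.1 - x p.2))}
      = (1 / 2) * sSup {s : ℝ | ∃ i j : Fin n, i < j ∧ s = ∑ k, |A i k - A j k|} := by
  have : Nontrivial (Fin n) := Fin.nontrivial_iff_two_le.mpr hn
  obtain ⟨⟨⟨i₀, j₀⟩, hM⟩, hub⟩ := isGreatest_range_sSup_pairs_lt
    (fun i j => ∑ k, |A i k - A j k|) (fun i j => by simp only [abs_sub_comm])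
    (fun i j k => by simpa using sum_nonneg fun k' _ => abs_nonneg (A j k' - A k k'))
  have hM : ∑ k, |A i₀ k - A j₀ k| = _ := hM
  set M := sSup {s : ℝ | ∃ i j : Fin n, i < j ∧ s = ∑ k, |A i k - A j k|}
  have hrow' : ∀ i j, ∑ k, A i k = ∑ k, A j k := fun i j => by rw [hrow, hrow]
  have hcontr := diamSeminorm_mulVec_le A hrow' (fun i j => hub ⟨(i, j), rfl⟩)
  obtain ⟨x₀, hx₀, hsum⟩ := exists_diamSeminorm_eq_one_and_sum_mul_eq
    (a := fun k => A i₀ k - A j₀ k) (by rw [sum_sub_distrib, hrow, hrow, sub_self])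
  have hattain : M / 2 ≤ diamSeminorm (A *ᵥ x₀) := by
    have := diamSeminorm.sub_le (A *ᵥ x₀) i₀ j₀
    rwa [A.mulVec_sub_mulVec, hsum, hM] at this
  rw [one_div_mul_eq_div]
  exact sSup_diamSeminorm_div_eq (A *ᵥ ·) hcontr hx₀ hattain

/-- For a row-stochastic matrix, the contraction rate with respect to the diameter
seminorm equals the Doeblin contraction coefficient. -/
theorem stmt13 (n : ℕ) (hn : 2 ≤ n) (A : Matrix (Fin n) (Fin n) ℝ)
    (hpos : ∀ i j, 0 ≤ A i j) (hrow : ∀ i, ∑ j, A i j = 1) :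
    sSup {r : ℝ | ∃ x : Fin n → ℝ,
        (⨆ p : Fin n × Fin n, (x p.1 - x p.2)) ≠ 0 ∧
        r = (⨆ p : Fin n × Fin n, (A.mulVec x p.1 - A.mulVec x p.2)) /
            (⨆ p : Fin n × Fin n, (x p.1 - x p.2))}
      = (1 / 2) * sSup {s : ℝ | ∃ i j : Fin n, i < j ∧ s = ∑ k, |A i k - A j k|} :=
  stmt13_general n hn A hrow
end

section
/- For a row-stochastic matrix A, the contraction rate δ(A) of ν ↦ νA on probability vectors with respect to the l^1 norm, i.e., max{||νA − πA||_1 / ||ν − π||_1 : ν ≠ π probability vectors}, equals max{||νA||_1 : ν ∈ R^n, ||ν||_1 = 1, Σν_i = 0}, and also equals the contraction rate of x ↦ Ax with respect to the diameter seminorm Δ. -/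
/-!
All three quantities equal the Dobrushin coefficient `δ(A) = ½ max_{i,j} ‖A_i - A_j‖₁`.
The key inequality is `⟪c, x⟫ ≤ ½ ‖c‖₁ Δ(x)` for zero-sum `c`, obtained by centring `x` at
the midpoint of its range. Applied to `c = A_i - A_j` it gives `Δ(Ax) ≤ δ(A) Δ(x)`; applied
to `ν` after writing `‖νA‖₁ = ⟪ν, As⟫` with `s` the sign vector of `νA` it gives
`‖νA‖₁ ≤ δ(A) ‖ν‖₁`. Both bounds are attained for a pair `i, j` maximizing `‖A_i - A_j‖₁`,
by `ν = (e_i - e_j) / 2` and `x = sign (A_i - A_j)`. Finally, differences of distinct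
probability vectors are, up to a positive factor, exactly the nonzero zero-sum vectors.
-/

open Finset Matrix

variable {ι κ : Type*}

/-- The diameter seminorm `Δ`. -/
noncomputable def spread (x : ι → ℝ) : ℝ := ⨆ p : ι × ι, (x p.1 - x p.2)

lemma le_spread [Finite ι] (x : ι → ℝ) (i j : ι) : x i - x j ≤ spread x :=
  le_ciSup (f := fun p : ι × ι => x p.1 - x p.2) (Set.finite_range _).bddAbove (i, j)

lemma spread_le [Nonempty ι] {x : ι → ℝ} {c : ℝ} (h : ∀ i j, x i - x j ≤ c) : spread x ≤ c :=
  ciSup_le fun p => h p.1 p.2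

lemma spread_nonneg [Finite ι] (x : ι → ℝ) : 0 ≤ spread x := by
  cases isEmpty_or_nonempty ι with
  | inl _ => simp [spread]
  | inr h =>
    obtain ⟨i⟩ := h
    simpa using le_spread x i i

lemma spread_eq_zero_of_subsingleton [Subsingleton ι] (x : ι → ℝ) : spread x = 0 := by
  have h : ∀ p : ι × ι, x p.1 - x p.2 = 0 := fun p => by rw [Subsingleton.elim p.1 p.2, sub_self]
  simp only [spread, h, Real.iSup_const_zero]

lemma sum_mul_le_half_sum_abs_mul_spread [Fintype ι] (c x : ι → ℝ) (hc : ∑ i, c i = 0) :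
    ∑ i, c i * x i ≤ (∑ i, |c i|) / 2 * spread x := by
  cases isEmpty_or_nonempty ι
  · simp
  obtain ⟨a, ha⟩ := Finite.exists_max x
  obtain ⟨b, hb⟩ := Finite.exists_min x
  have hdev : ∀ i, |x i - (x a + x b) / 2| ≤ spread x / 2 := fun i =>
    abs_le.2 ⟨by linarith [hb i, le_spread x a b], by linarith [ha i, le_spread x a b]⟩
  calc ∑ i, c i * x i = ∑ i, c i * (x i - (x a + x b) / 2) := by
        simp only [mul_sub, sum_sub_distrib, ← sum_mul, hc, zero_mul, sub_zero]
    _ ≤ ∑ i, |c i| * (spread x / 2) := sum_le_sum fun i _ => by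
        calc c i * (x i - (x a + x b) / 2) ≤ |c i| * |x i - (x a + x b) / 2| := by
              rw [← abs_mul]; exact le_abs_self _
          _ ≤ |c i| * (spread x / 2) := mul_le_mul_of_nonneg_left (hdev i) (abs_nonneg _)
    _ = (∑ i, |c i|) / 2 * spread x := by rw [← sum_mul]; ring

lemma sum_mul_le_sum_abs_of_abs_le_one [Fintype ι] (c s : ι → ℝ) (hs : ∀ i, |s i| ≤ 1) :
    ∑ i, c i * s i ≤ ∑ i, |c i| :=
  sum_le_sum fun i _ => calc
    c i * s i ≤ |c i| * |s i| := by rw [← abs_mul]; exact le_abs_self _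
    _ ≤ |c i| := mul_le_of_le_one_right (abs_nonneg _) (hs i)

lemma abs_sign_le_one (a : ℝ) : |(SignType.sign a : ℝ)| ≤ 1 := by
  rcases SignType.sign a with _ | _ | _ <;> simp

noncomputable def dobrushinCoeff (A : Matrix ι κ ℝ) [Fintype κ] : ℝ :=
  (⨆ p : ι × ι, ∑ k, |A p.1 k - A p.2 k|) / 2

section Dobrushin

variable [Fintype κ] (A : Matrix ι κ ℝ)

lemma sum_abs_sub_le_dobrushinCoeff [Finite ι] (i j : ι) :
    (∑ k, |A i k - A j k|) / 2 ≤ dobrushinCoeff A := by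
  unfold dobrushinCoeff
  gcongr
  exact le_ciSup (f := fun p : ι × ι => ∑ k, |A p.1 k - A p.2 k|)
    (Set.finite_range _).bddAbove (i, j)

lemma exists_eq_dobrushinCoeff [Finite ι] [Nonempty ι] :
    ∃ i j, (∑ k, |A i k - A j k|) / 2 = dobrushinCoeff A := by
  obtain ⟨p, hp⟩ := Finite.exists_max fun p : ι × ι => ∑ k, |A p.1 k - A p.2 k|
  refine ⟨p.1, p.2, ?_⟩
  unfold dobrushinCoeff
  rw [le_antisymm (le_ciSup (Set.finite_range _).bddAbove p) (ciSup_le hp)]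

lemma exists_ne_eq_dobrushinCoeff [Finite ι] [Nontrivial ι] :
    ∃ i j, i ≠ j ∧ (∑ k, |A i k - A j k|) / 2 = dobrushinCoeff A := by
  obtain ⟨i, j, hij⟩ := exists_eq_dobrushinCoeff A
  by_cases h : i = j
  · obtain ⟨a, b, hab⟩ := exists_pair_ne ι
    refine ⟨a, b, hab, le_antisymm (sum_abs_sub_le_dobrushinCoeff A a b) ?_⟩
    rw [← hij, h]
    simp only [sub_self, abs_zero, sum_const_zero, zero_div]
    positivity
  · exact ⟨i, j, h, hij⟩

lemma mulVec_apply_sub_mulVec_apply (x : κ → ℝ) (i j : ι) :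
    (A *ᵥ x) i - (A *ᵥ x) j = ∑ k, (A i k - A j k) * x k := by
  simp only [mulVec, dotProduct, ← sum_sub_distrib, sub_mul]

lemma spread_mulVec_le [Fintype ι] (hrow : ∀ i j, ∑ k, A i k = ∑ k, A j k) (x : κ → ℝ) :
    spread (A *ᵥ x) ≤ dobrushinCoeff A * spread x := by
  cases isEmpty_or_nonempty ι
  · simp [spread, dobrushinCoeff]
  refine spread_le fun i j => ?_
  rw [mulVec_apply_sub_mulVec_apply]
  calc ∑ k, (A i k - A j k) * x k ≤ (∑ k, |A i k - A j k|) / 2 * spread x :=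
        sum_mul_le_half_sum_abs_mul_spread _ x (by rw [sum_sub_distrib, hrow i j, sub_self])
    _ ≤ dobrushinCoeff A * spread x :=
        mul_le_mul_of_nonneg_right (sum_abs_sub_le_dobrushinCoeff A i j) (spread_nonneg x)

lemma spread_mulVec_le_of_abs_le_one [Fintype ι] {s : κ → ℝ} (hs : ∀ k, |s k| ≤ 1) :
    spread (A *ᵥ s) ≤ 2 * dobrushinCoeff A := by
  cases isEmpty_or_nonempty ι
  · simp [spread, dobrushinCoeff]
  refine spread_le fun i j => ?_
  rw [mulVec_apply_sub_mulVec_apply]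
  linarith [sum_mul_le_sum_abs_of_abs_le_one (fun k => A i k - A j k) s hs,
    sum_abs_sub_le_dobrushinCoeff A i j]

lemma sum_abs_vecMul_le [Fintype ι] (ν : ι → ℝ) (hν : ∑ i, ν i = 0) :
    ∑ k, |(ν ᵥ* A) k| ≤ dobrushinCoeff A * ∑ i, |ν i| := by
  set s : κ → ℝ := fun k => SignType.sign ((ν ᵥ* A) k)
  calc ∑ k, |(ν ᵥ* A) k| = ∑ i, ν i * (A *ᵥ s) i := by
        rw [← dotProduct, dotProduct_mulVec]
        simp only [dotProduct, s, self_mul_sign]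
    _ ≤ (∑ i, |ν i|) / 2 * spread (A *ᵥ s) := sum_mul_le_half_sum_abs_mul_spread ν _ hν
    _ ≤ (∑ i, |ν i|) / 2 * (2 * dobrushinCoeff A) := by
        gcongr
        exact spread_mulVec_le_of_abs_le_one A fun k => abs_sign_le_one _
    _ = dobrushinCoeff A * ∑ i, |ν i| := by ring

def spreadContractionRatios : Set ℝ :=
  {r | ∃ x : κ → ℝ, spread x ≠ 0 ∧ r = spread (A *ᵥ x) / spread x}

lemma spreadContractionRatios_eq_empty [Subsingleton κ] : spreadContractionRatios A = ∅ :=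
  Set.eq_empty_of_forall_notMem fun _ ⟨x, hx, _⟩ => hx (spread_eq_zero_of_subsingleton x)

lemma exists_mem_spreadContractionRatios_ge [Fintype ι] [Nonempty ι] [Nontrivial κ]
    [DecidableEq κ] (hrow : ∀ i j, ∑ k, A i k = ∑ k, A j k) :
    ∃ r ∈ spreadContractionRatios A, dobrushinCoeff A ≤ r := by
  obtain ⟨i, j, hδ⟩ := exists_eq_dobrushinCoeff A
  rcases (hδ ▸ by positivity : 0 ≤ dobrushinCoeff A).eq_or_lt with hzero | hpos
  · obtain ⟨k, l, hkl⟩ := exists_pair_ne κ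
    have hx : 1 ≤ spread (Pi.single k 1 : κ → ℝ) := by
      simpa [hkl.symm] using le_spread (Pi.single k 1 : κ → ℝ) k l
    exact ⟨_, ⟨_, by linarith, rfl⟩, hzero ▸ div_nonneg (spread_nonneg _) (spread_nonneg _)⟩
  -- the sign vector of `A_i - A_j` realises `‖A_i - A_j‖₁ = 2 δ(A)` as a difference of `A s`
  set s : κ → ℝ := fun k => SignType.sign (A i k - A j k)
  have hAs : 2 * dobrushinCoeff A ≤ spread (A *ᵥ s) := calc
    2 * dobrushinCoeff A = (A *ᵥ s) i - (A *ᵥ s) j := by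
      rw [mulVec_apply_sub_mulVec_apply, ← hδ]
      simp only [s, self_mul_sign]
      ring
    _ ≤ spread (A *ᵥ s) := le_spread _ i j
  have hs : spread s ≤ 2 := spread_le fun k l => by
    linarith [abs_le.mp (abs_sign_le_one (A i k - A j k)),
      abs_le.mp (abs_sign_le_one (A i l - A j l))]
  have hs_pos : 0 < spread s := by nlinarith [spread_mulVec_le A hrow s]
  refine ⟨_, ⟨s, hs_pos.ne', rfl⟩, ?_⟩
  rw [le_div_iff₀ hs_pos]
  nlinarith

lemma csSup_spreadContractionRatios [Fintype ι] [Nonempty ι] [Nontrivial κ] [DecidableEq κ]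
    (hrow : ∀ i j, ∑ k, A i k = ∑ k, A j k) :
    sSup (spreadContractionRatios A) = dobrushinCoeff A := by
  have hub : ∀ r ∈ spreadContractionRatios A, r ≤ dobrushinCoeff A := by
    rintro _ ⟨x, hx, rfl⟩
    rw [div_le_iff₀ ((spread_nonneg x).lt_of_ne' hx)]
    exact spread_mulVec_le A hrow x
  obtain ⟨r, hr, hδr⟩ := exists_mem_spreadContractionRatios_ge A hrow
  exact le_antisymm (csSup_le ⟨r, hr⟩ hub) (le_csSup_of_le ⟨_, hub⟩ hr hδr)

end Dobrushin

section Ratios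

variable [Fintype ι] [Fintype κ] (A : Matrix ι κ ℝ)

def probContractionRatios : Set ℝ :=
  {r | ∃ ν π : ι → ℝ, ((∀ i, 0 ≤ ν i) ∧ ∑ i, ν i = 1) ∧ ((∀ i, 0 ≤ π i) ∧ ∑ i, π i = 1) ∧
    ν ≠ π ∧ r = (∑ k, |(ν ᵥ* A - π ᵥ* A) k|) / ∑ i, |ν i - π i|}

def zeroSumNormImages : Set ℝ :=
  {r | ∃ ν : ι → ℝ, ∑ i, |ν i| = 1 ∧ ∑ i, ν i = 0 ∧ r = ∑ k, |(ν ᵥ* A) k|}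

lemma sum_abs_smul (c : ℝ) (v : ι → ℝ) : ∑ i, |(c • v) i| = |c| * ∑ i, |v i| := by
  simp only [Pi.smul_apply, smul_eq_mul, abs_mul, mul_sum]

lemma probContractionRatios_subset : probContractionRatios A ⊆ zeroSumNormImages A := by
  rintro _ ⟨ν, π, ⟨-, hν⟩, ⟨-, hπ⟩, hne, rfl⟩
  have hN : 0 < ∑ i, |(ν - π) i| := by
    obtain ⟨i, hi⟩ := Function.ne_iff.mp hne
    exact sum_pos' (fun j _ => abs_nonneg _) ⟨i, mem_univ i, abs_pos.mpr (sub_ne_zero.mpr hi)⟩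
  refine ⟨(∑ i, |(ν - π) i|)⁻¹ • (ν - π), ?_, ?_, ?_⟩
  · rw [sum_abs_smul, abs_of_pos (inv_pos.mpr hN), inv_mul_cancel₀ hN.ne']
  · simp only [Pi.smul_apply, Pi.sub_apply, smul_eq_mul, ← mul_sum, sum_sub_distrib, hν, hπ,
      sub_self, mul_zero]
  · rw [smul_vecMul, sum_abs_smul, abs_of_pos (inv_pos.mpr hN), sub_vecMul, inv_mul_eq_div]
    rfl

lemma zeroSumNormImages_subset : zeroSumNormImages A ⊆ probContractionRatios A := by
  rintro _ ⟨μ, h1, h0, rfl⟩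
  have hdiff : (fun i => |μ i| + μ i) - (fun i => |μ i| - μ i) = (2 : ℝ) • μ := by
    ext i; simp only [Pi.sub_apply, Pi.smul_apply, smul_eq_mul]; ring
  refine ⟨fun i => |μ i| + μ i, fun i => |μ i| - μ i,
    ⟨fun i => neg_le_iff_add_nonneg'.mp (neg_abs_le _), ?_⟩,
    ⟨fun i => sub_nonneg.mpr (le_abs_self _), ?_⟩, fun h => ?_, ?_⟩
  · rw [sum_add_distrib, h1, h0, add_zero]
  · rw [sum_sub_distrib, h1, h0, sub_zero]
  · have hμ : μ = 0 := by
      rw [← sub_eq_zero, hdiff] at h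
      exact (smul_eq_zero.mp h).resolve_left two_ne_zero
    simp [hμ] at h1
  · rw [← sub_vecMul, hdiff, smul_vecMul, sum_abs_smul]
    change _ = _ / ∑ i, |(((fun i => |μ i| + μ i) - (fun i => |μ i| - μ i)) i)|
    rw [hdiff, sum_abs_smul, h1]
    ring

lemma zeroSumNormImages_eq_empty [Subsingleton ι] : zeroSumNormImages A = ∅ := by
  refine Set.eq_empty_of_forall_notMem ?_
  rintro _ ⟨ν, h1, h0, -⟩
  cases isEmpty_or_nonempty ι with
  | inl _ => simp at h1
  | inr h =>
    obtain ⟨i⟩ := h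
    rw [Fintype.sum_subsingleton _ i] at h0 h1
    simp [h0] at h1

lemma csSup_zeroSumNormImages [Nontrivial ι] [DecidableEq ι] :
    sSup (zeroSumNormImages A) = dobrushinCoeff A := by
  obtain ⟨i, j, hij, hδ⟩ := exists_ne_eq_dobrushinCoeff A
  set e : ι → ℝ := Pi.single i 1 - Pi.single j 1
  have he : ∀ k, k ≠ i ∧ k ≠ j → |e k| = 0 := fun k hk => by simp [e, hk.1, hk.2]
  refine IsGreatest.csSup_eq ⟨⟨(1 / 2 : ℝ) • e, ?_, ?_, ?_⟩, ?_⟩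
  · rw [sum_abs_smul, Fintype.sum_eq_add i j hij he]
    norm_num [e, hij, hij.symm]
  · simp only [Pi.smul_apply, smul_eq_mul, ← mul_sum, e, Pi.sub_apply, sum_sub_distrib,
      Fintype.sum_pi_single', sub_self, mul_zero]
  · rw [smul_vecMul, sum_abs_smul, sub_vecMul, single_vecMul, single_vecMul, ← hδ]
    simp [div_eq_inv_mul]
  · rintro _ ⟨ν, h1, h0, rfl⟩
    simpa [h1] using sum_abs_vecMul_le A ν h0

end Ratios

theorem stmt15_general (n : ℕ) (A : Matrix (Fin n) (Fin n) ℝ)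
    (hrow : ∀ i, ∑ j, A i j = 1) :
    sSup {r : ℝ | ∃ ν π : Fin n → ℝ,
        ((∀ i, 0 ≤ ν i) ∧ ∑ i, ν i = 1) ∧ ((∀ i, 0 ≤ π i) ∧ ∑ i, π i = 1) ∧ ν ≠ π ∧
        r = (∑ i, |(Matrix.vecMul ν A - Matrix.vecMul π A) i|) / (∑ i, |ν i - π i|)}
      = sSup {r : ℝ | ∃ ν : Fin n → ℝ, (∑ i, |ν i| = 1) ∧ (∑ i, ν i = 0) ∧
          r = ∑ i, |Matrix.vecMul ν A i|}
    ∧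
    sSup {r : ℝ | ∃ ν π : Fin n → ℝ,
        ((∀ i, 0 ≤ ν i) ∧ ∑ i, ν i = 1) ∧ ((∀ i, 0 ≤ π i) ∧ ∑ i, π i = 1) ∧ ν ≠ π ∧
        r = (∑ i, |(Matrix.vecMul ν A - Matrix.vecMul π A) i|) / (∑ i, |ν i - π i|)}
      = sSup {r : ℝ | ∃ x : Fin n → ℝ,
          (⨆ p : Fin n × Fin n, (x p.1 - x p.2)) ≠ 0 ∧
          r = (⨆ p : Fin n × Fin n, (A.mulVec x p.1 - A.mulVec x p.2)) /
              (⨆ p : Fin n × Fin n, (x p.1 - x p.2))} := by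
  change sSup (probContractionRatios A) = sSup (zeroSumNormImages A) ∧
    sSup (probContractionRatios A) = sSup (spreadContractionRatios A)
  rw [(probContractionRatios_subset A).antisymm (zeroSumNormImages_subset A)]
  refine ⟨rfl, ?_⟩
  rcases subsingleton_or_nontrivial (Fin n) with _ | _
  · rw [zeroSumNormImages_eq_empty, spreadContractionRatios_eq_empty]
  · rw [csSup_zeroSumNormImages, csSup_spreadContractionRatios A fun i j => by rw [hrow, hrow]]

/-- The ℓ¹ contraction rate of `ν ↦ νA` on probability vectors equals its operator norm
on the zero-sum hyperplane, and equals the contraction rate of `x ↦ Ax` with respect to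
the diameter seminorm. -/
theorem stmt15 (n : ℕ) (A : Matrix (Fin n) (Fin n) ℝ)
    (hpos : ∀ i j, 0 ≤ A i j) (hrow : ∀ i, ∑ j, A i j = 1) :
    sSup {r : ℝ | ∃ ν π : Fin n → ℝ,
        ((∀ i, 0 ≤ ν i) ∧ ∑ i, ν i = 1) ∧ ((∀ i, 0 ≤ π i) ∧ ∑ i, π i = 1) ∧ ν ≠ π ∧
        r = (∑ i, |(Matrix.vecMul ν A - Matrix.vecMul π A) i|) / (∑ i, |ν i - π i|)}
      = sSup {r : ℝ | ∃ ν : Fin n → ℝ, (∑ i, |ν i| = 1) ∧ (∑ i, ν i = 0) ∧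
          r = ∑ i, |Matrix.vecMul ν A i|}
    ∧
    sSup {r : ℝ | ∃ ν π : Fin n → ℝ,
        ((∀ i, 0 ≤ ν i) ∧ ∑ i, ν i = 1) ∧ ((∀ i, 0 ≤ π i) ∧ ∑ i, π i = 1) ∧ ν ≠ π ∧
        r = (∑ i, |(Matrix.vecMul ν A - Matrix.vecMul π A) i|) / (∑ i, |ν i - π i|)}
      = sSup {r : ℝ | ∃ x : Fin n → ℝ,
          (⨆ p : Fin n × Fin n, (x p.1 - x p.2)) ≠ 0 ∧
          r = (⨆ p : Fin n × Fin n, (A.mulVec x p.1 - A.mulVec x p.2)) /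
              (⨆ p : Fin n × Fin n, (x p.1 - x p.2))} :=
  stmt15_general n A hrow
end

section
/- Let Φ(X) = Σ_{i=1}^m V_i* X V_i be a completely positive unital map on Hermitian n×n matrices (so Σ V_i* V_i = I_n). Then the contraction rate ||Φ||_H = sup{(λ_max(Φ(X)) − λ_min(Φ(X)))/(λ_max(X) − λ_min(X)) : X Hermitian, λ_max(X) ≠ λ_min(X)} equals 1 if and only if there exist nonzero vectors u, v ∈ C^n such that ⟨V_i u, V_j v⟩ = 0 for all i, j ∈ {1,...,m}. -/
/-!
The Kraus map `Φ` is positive and unital, so it maps the Loewner interval `[m, M]` into itself;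
since `λ_max X` is the least `M` with `X ≤ M` and `λ_min X` the greatest `m` with `m ≤ X`, every
ratio is at most `1`. If `⟨V_i u, V_j v⟩ = 0`, let `P` be the orthogonal projection onto the span
of the `V_i u`: then `⟨u, Φ(P) u⟩ = ‖u‖²` and `⟨v, Φ(P) v⟩ = 0`, so `P` and `Φ(P)` both have
extreme eigenvalues `0` and `1`, and the ratio `1` is attained.

Conversely, after an affine rescaling of `X` every ratio is a value of
`re ⟨p, Φ(X) p⟩ - re ⟨q, Φ(X) q⟩` with `0 ≤ X ≤ 1` and unit vectors `p, q`. This continuous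
function attains its maximum on the compact set of such triples; if the maximum is `1`, then
`∑ ⟨V_i p, (1 - X) V_i p⟩ = 0` and `∑ ⟨V_j q, X V_j q⟩ = 0`, so every `V_i p` lies in the kernel
of `1 - X` and every `V_j q` in the kernel of `X`, and these are orthogonal.
-/

open scoped Matrix ComplexOrder

open Matrix

section

open scoped MatrixOrder

variable {ι κ : Type*} [Fintype ι] [Fintype κ]

lemma Matrix.algebraMap_mulVec [DecidableEq ι] (r : ℝ) (x : ι → ℂ) :
    algebraMap ℝ (Matrix ι ι ℂ) r *ᵥ x = (r : ℂ) • x := by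
  rw [Algebra.algebraMap_eq_smul_one, ← Complex.coe_smul, smul_mulVec, one_mulVec]

lemma Matrix.star_ofLp_dotProduct_ofLp (x : EuclideanSpace ℂ ι) :
    star x.ofLp ⬝ᵥ x.ofLp = (‖x‖ ^ 2 : ℂ) := by
  rw [dotProduct_comm, ← EuclideanSpace.inner_eq_star_dotProduct, inner_self_eq_norm_sq_to_K]
  rfl

lemma Matrix.PosSemidef.mulVec_eq_zero_of_re_dotProduct_eq_zero {B : Matrix ι ι ℂ}
    (hB : B.PosSemidef) {x : ι → ℂ} (h : (star x ⬝ᵥ B *ᵥ x).re = 0) : B *ᵥ x = 0 := by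
  refine (hB.dotProduct_mulVec_zero_iff x).1 (Complex.ext h ?_)
  exact (Complex.nonneg_iff.1 (hB.dotProduct_mulVec_nonneg x)).2.symm

lemma Matrix.re_star_dotProduct_self_pos {x : ι → ℂ} (hx : x ≠ 0) : 0 < (star x ⬝ᵥ x).re :=
  (Complex.lt_def.1 (dotProduct_star_self_pos_iff.2 hx)).1

lemma Matrix.re_dotProduct_mulVec_le_of_le_algebraMap [DecidableEq ι] {A : Matrix ι ι ℂ} {r : ℝ}
    (h : A ≤ algebraMap ℝ _ r) (x : ι → ℂ) :
    (star x ⬝ᵥ A *ᵥ x).re ≤ r * (star x ⬝ᵥ x).re := by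
  have := (Matrix.le_iff.1 h).re_dotProduct_nonneg x
  simp only [sub_mulVec, algebraMap_mulVec, dotProduct_sub, dotProduct_smul, RCLike.re_to_complex,
    Complex.sub_re, smul_eq_mul, Complex.re_ofReal_mul] at this
  linarith

lemma Matrix.le_re_dotProduct_mulVec_of_algebraMap_le [DecidableEq ι] {A : Matrix ι ι ℂ} {r : ℝ}
    (h : algebraMap ℝ _ r ≤ A) (x : ι → ℂ) :
    r * (star x ⬝ᵥ x).re ≤ (star x ⬝ᵥ A *ᵥ x).re := by
  have := (Matrix.le_iff.1 h).re_dotProduct_nonneg x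
  simp only [sub_mulVec, algebraMap_mulVec, dotProduct_sub, dotProduct_smul, RCLike.re_to_complex,
    Complex.sub_re, smul_eq_mul, Complex.re_ofReal_mul] at this
  linarith

namespace Matrix.IsHermitian

variable [DecidableEq ι] {A : Matrix ι ι ℂ} (hA : A.IsHermitian)

lemma re_dotProduct_mulVec_eigenvectorBasis (j : ι) :
    (star (hA.eigenvectorBasis j).ofLp ⬝ᵥ A *ᵥ (hA.eigenvectorBasis j).ofLp).re
      = hA.eigenvalues j := by
  rw [hA.mulVec_eigenvectorBasis, dotProduct_smul, star_ofLp_dotProduct_ofLp,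
    hA.eigenvectorBasis.norm_eq_one]
  simp

variable [Nonempty ι]

lemma le_algebraMap_iff {r : ℝ} : A ≤ algebraMap ℝ _ r ↔ ⨆ i, hA.eigenvalues i ≤ r := by
  rw [le_algebraMap_iff_spectrum_le hA.isSelfAdjoint, hA.spectrum_real_eq_range_eigenvalues,
    Set.forall_mem_range, ciSup_le_iff (Set.finite_range _).bddAbove]

lemma algebraMap_le_iff {r : ℝ} : algebraMap ℝ _ r ≤ A ↔ r ≤ ⨅ i, hA.eigenvalues i := by
  rw [algebraMap_le_iff_le_spectrum hA.isSelfAdjoint, hA.spectrum_real_eq_range_eigenvalues,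
    Set.forall_mem_range, le_ciInf_iff (Set.finite_range _).bddBelow]

lemma re_dotProduct_mulVec_le (x : ι → ℂ) :
    (star x ⬝ᵥ A *ᵥ x).re ≤ (⨆ i, hA.eigenvalues i) * (star x ⬝ᵥ x).re :=
  re_dotProduct_mulVec_le_of_le_algebraMap (hA.le_algebraMap_iff.2 le_rfl) x

lemma le_re_dotProduct_mulVec (x : ι → ℂ) :
    (⨅ i, hA.eigenvalues i) * (star x ⬝ᵥ x).re ≤ (star x ⬝ᵥ A *ᵥ x).re :=
  le_re_dotProduct_mulVec_of_algebraMap_le (hA.algebraMap_le_iff.2 le_rfl) x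

lemma iSup_eigenvalues_eq_of_le_algebraMap {r : ℝ} (h : A ≤ algebraMap ℝ _ r) {x : ι → ℂ}
    (hx : x ≠ 0) (hxr : (star x ⬝ᵥ A *ᵥ x).re = r * (star x ⬝ᵥ x).re) :
    ⨆ i, hA.eigenvalues i = r :=
  le_antisymm (hA.le_algebraMap_iff.1 h)
    (le_of_mul_le_mul_right (hxr ▸ hA.re_dotProduct_mulVec_le x) (re_star_dotProduct_self_pos hx))

lemma iInf_eigenvalues_eq_of_algebraMap_le {r : ℝ} (h : algebraMap ℝ _ r ≤ A) {x : ι → ℂ}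
    (hx : x ≠ 0) (hxr : (star x ⬝ᵥ A *ᵥ x).re = r * (star x ⬝ᵥ x).re) :
    ⨅ i, hA.eigenvalues i = r :=
  le_antisymm
    (le_of_mul_le_mul_right (hxr ▸ hA.le_re_dotProduct_mulVec x) (re_star_dotProduct_self_pos hx))
    (hA.algebraMap_le_iff.1 h)

lemma exists_re_dotProduct_mulVec_eq_iSup :
    ∃ x : EuclideanSpace ℂ ι, ‖x‖ = 1 ∧
      (star x.ofLp ⬝ᵥ A *ᵥ x.ofLp).re = ⨆ i, hA.eigenvalues i := by
  obtain ⟨j, hj⟩ := exists_eq_ciSup_of_finite (f := hA.eigenvalues)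
  exact ⟨_, hA.eigenvectorBasis.norm_eq_one j, hA.re_dotProduct_mulVec_eigenvectorBasis j ▸ hj⟩

lemma exists_re_dotProduct_mulVec_eq_iInf :
    ∃ x : EuclideanSpace ℂ ι, ‖x‖ = 1 ∧
      (star x.ofLp ⬝ᵥ A *ᵥ x.ofLp).re = ⨅ i, hA.eigenvalues i := by
  obtain ⟨j, hj⟩ := exists_eq_ciInf_of_finite (f := hA.eigenvalues)
  exact ⟨_, hA.eigenvectorBasis.norm_eq_one j, hA.re_dotProduct_mulVec_eigenvectorBasis j ▸ hj⟩

end Matrix.IsHermitian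

section Kraus

variable (V : κ → Matrix ι ι ℂ)

def krausMap : Matrix ι ι ℂ →ₗ[ℂ] Matrix ι ι ℂ where
  toFun X := ∑ i, (V i)ᴴ * X * V i
  map_add' X Y := by simp only [Matrix.mul_add, Matrix.add_mul, Finset.sum_add_distrib]
  map_smul' c X := by
    simp only [Matrix.mul_smul, Matrix.smul_mul, Finset.smul_sum, RingHom.id_apply]

variable {V}

lemma krausMap_apply (X : Matrix ι ι ℂ) : krausMap V X = ∑ i, (V i)ᴴ * X * V i := rfl

lemma krausMap_one [DecidableEq ι] (hunital : ∑ i, (V i)ᴴ * V i = 1) : krausMap V 1 = 1 := by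
  simp only [krausMap_apply, Matrix.mul_one, hunital]

lemma krausMap_algebraMap [DecidableEq ι] (hunital : ∑ i, (V i)ᴴ * V i = 1) (r : ℝ) :
    krausMap V (algebraMap ℝ _ r) = algebraMap ℝ _ r := by
  rw [Algebra.algebraMap_eq_smul_one, ← Complex.coe_smul, map_smul, krausMap_one hunital]

lemma posSemidef_krausMap {X : Matrix ι ι ℂ} (hX : X.PosSemidef) :
    (krausMap V X).PosSemidef :=
  posSemidef_sum _ fun i _ => hX.conjTranspose_mul_mul_same (V i)

lemma isHermitian_krausMap {X : Matrix ι ι ℂ} (hX : X.IsHermitian) :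
    (krausMap V X).IsHermitian := by
  simp only [krausMap_apply, IsHermitian, conjTranspose_sum, conjTranspose_mul,
    conjTranspose_conjTranspose, hX.eq, Matrix.mul_assoc]

lemma krausMap_mono : Monotone (krausMap V) := fun X Y h => by
  rw [Matrix.le_iff, ← map_sub]
  exact posSemidef_krausMap (Matrix.le_iff.1 h)

lemma krausMap_mem_Icc [DecidableEq ι] (hunital : ∑ i, (V i)ᴴ * V i = 1) {X : Matrix ι ι ℂ}
    (hX : X ∈ Set.Icc 0 1) : krausMap V X ∈ Set.Icc 0 1 :=
  ⟨map_zero (krausMap V) ▸ krausMap_mono hX.1, krausMap_one hunital ▸ krausMap_mono hX.2⟩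

lemma dotProduct_krausMap_mulVec (X : Matrix ι ι ℂ) (x : ι → ℂ) :
    star x ⬝ᵥ krausMap V X *ᵥ x = ∑ i, star (V i *ᵥ x) ⬝ᵥ X *ᵥ (V i *ᵥ x) := by
  simp only [krausMap_apply, Matrix.sum_mulVec, dotProduct_sum, ← mulVec_mulVec,
    dotProduct_mulVec (star x), ← star_mulVec]

lemma mulVec_eq_zero_of_re_dotProduct_krausMap_eq_zero {X : Matrix ι ι ℂ}
    (hX : X.PosSemidef) {x : ι → ℂ} (h : (star x ⬝ᵥ krausMap V X *ᵥ x).re = 0) (i : κ) :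
    X *ᵥ (V i *ᵥ x) = 0 := by
  rw [dotProduct_krausMap_mulVec, Complex.re_sum] at h
  refine hX.mulVec_eq_zero_of_re_dotProduct_eq_zero ?_
  exact (Finset.sum_eq_zero_iff_of_nonneg fun j _ => hX.re_dotProduct_nonneg _).1 h i
    (Finset.mem_univ i)

lemma sum_star_mulVec_dotProduct_mulVec [DecidableEq ι] (hunital : ∑ i, (V i)ᴴ * V i = 1)
    (x : ι → ℂ) : ∑ i, star (V i *ᵥ x) ⬝ᵥ V i *ᵥ x = star x ⬝ᵥ x := by
  simpa [krausMap_one hunital] using (dotProduct_krausMap_mulVec (V := V) 1 x).symm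

variable [DecidableEq ι] [Nonempty ι]

lemma iSup_eigenvalues_krausMap_le (hunital : ∑ i, (V i)ᴴ * V i = 1) {X : Matrix ι ι ℂ}
    (hX : X.IsHermitian) (hY : (krausMap V X).IsHermitian) :
    ⨆ i, hY.eigenvalues i ≤ ⨆ i, hX.eigenvalues i := by
  rw [← hY.le_algebraMap_iff, ← krausMap_algebraMap hunital]
  exact krausMap_mono (hX.le_algebraMap_iff.2 le_rfl)

lemma iInf_eigenvalues_le_iInf_krausMap (hunital : ∑ i, (V i)ᴴ * V i = 1) {X : Matrix ι ι ℂ}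
    (hX : X.IsHermitian) (hY : (krausMap V X).IsHermitian) :
    ⨅ i, hX.eigenvalues i ≤ ⨅ i, hY.eigenvalues i := by
  rw [← hY.algebraMap_le_iff, ← krausMap_algebraMap hunital]
  exact krausMap_mono (hX.algebraMap_le_iff.2 le_rfl)

end Kraus

section Ratios

variable [DecidableEq ι] {V : κ → Matrix ι ι ℂ}

variable (V) in
def contractionRatios : Set ℝ :=
  {r | ∃ (X : Matrix ι ι ℂ) (hX : X.IsHermitian) (hY : (krausMap V X).IsHermitian),
    (⨆ i, hX.eigenvalues i) ≠ (⨅ i, hX.eigenvalues i) ∧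
    r = ((⨆ i, hY.eigenvalues i) - ⨅ i, hY.eigenvalues i) /
      ((⨆ i, hX.eigenvalues i) - ⨅ i, hX.eigenvalues i)}

-- Over an empty index type both `⨆` and `⨅` of real numbers are `0`.
lemma nonempty_of_mem_contractionRatios {r : ℝ} (hr : r ∈ contractionRatios V) : Nonempty ι := by
  obtain ⟨X, hX, -, hne, -⟩ := hr
  by_contra h
  rw [not_nonempty_iff] at h
  simp [Real.iSup_of_isEmpty, Real.iInf_of_isEmpty] at hne

lemma le_one_of_mem_contractionRatios (hunital : ∑ i, (V i)ᴴ * V i = 1) {r : ℝ}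
    (hr : r ∈ contractionRatios V) : r ≤ 1 := by
  have := nonempty_of_mem_contractionRatios hr
  obtain ⟨X, hX, hY, hne, rfl⟩ := hr
  have hlt : ⨅ i, hX.eigenvalues i < ⨆ i, hX.eigenvalues i :=
    (ciInf_le_ciSup (Set.finite_range _).bddBelow (Set.finite_range _).bddAbove).lt_of_ne hne.symm
  rw [div_le_one (sub_pos.2 hlt)]
  linarith [iSup_eigenvalues_krausMap_le hunital hX hY,
    iInf_eigenvalues_le_iInf_krausMap hunital hX hY]

end Ratios

section Orthogonal

variable [DecidableEq ι] {V : κ → Matrix ι ι ℂ}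

lemma exists_isStarProjection_mulVec (K : Submodule ℂ (EuclideanSpace ℂ ι)) :
    ∃ P : Matrix ι ι ℂ, IsStarProjection P ∧ (∀ x, WithLp.toLp 2 x ∈ K → P *ᵥ x = x) ∧
      ∀ x, WithLp.toLp 2 x ∈ Kᗮ → P *ᵥ x = 0 := by
  refine ⟨(toEuclideanCLM (𝕜 := ℂ)).symm K.starProjection,
    (isStarProjection_starProjection (U := K)).map (toEuclideanCLM (𝕜 := ℂ) (n := ι)).symm,
    fun x hx => ?_, fun x hx => ?_⟩
  all_goals rw [← ofLp_toEuclideanCLM, StarAlgEquiv.apply_symm_apply]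
  · rw [Submodule.starProjection_eq_self_iff.2 hx]
  · rw [(K.starProjection_apply_eq_zero_iff).2 hx]
    rfl

lemma one_mem_contractionRatios [Nonempty ι] (hunital : ∑ i, (V i)ᴴ * V i = 1) {u v : ι → ℂ}
    (hu : u ≠ 0) (hv : v ≠ 0) (horth : ∀ i j, star (V i *ᵥ u) ⬝ᵥ V j *ᵥ v = 0) :
    1 ∈ contractionRatios V := by
  set Ku := Submodule.span ℂ (Set.range fun i => WithLp.toLp 2 (V i *ᵥ u))
  set Kv := Submodule.span ℂ (Set.range fun i => WithLp.toLp 2 (V i *ᵥ v))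
  have hKuv : Kv ≤ Kuᗮ := by
    refine (Submodule.isOrtho_span.2 ?_).ge
    rintro _ ⟨i, rfl⟩ _ ⟨j, rfl⟩
    rw [EuclideanSpace.inner_eq_star_dotProduct, dotProduct_comm]
    exact horth i j
  obtain ⟨P, hP, hPu, hPv⟩ := exists_isStarProjection_mulVec Ku
  have hX : P.IsHermitian := hP.isSelfAdjoint
  have hY : (krausMap V P).IsHermitian := isHermitian_krausMap hX
  have hPY := krausMap_mem_Icc hunital hP.mem_Icc
  have hu' : star u ⬝ᵥ krausMap V P *ᵥ u = star u ⬝ᵥ u := by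
    simp only [dotProduct_krausMap_mulVec, sum_star_mulVec_dotProduct_mulVec hunital,
      hPu _ (Submodule.subset_span (Set.mem_range_self _))]
  have hv' : star v ⬝ᵥ krausMap V P *ᵥ v = 0 := by
    simp only [dotProduct_krausMap_mulVec, dotProduct_zero, Finset.sum_const_zero,
      hPv _ (hKuv (Submodule.subset_span (Set.mem_range_self _)))]
  have hYtop : ⨆ i, hY.eigenvalues i = 1 :=
    hY.iSup_eigenvalues_eq_of_le_algebraMap (by simpa using hPY.2) hu (by simp [hu'])
  have hYbot : ⨅ i, hY.eigenvalues i = 0 :=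
    hY.iInf_eigenvalues_eq_of_algebraMap_le (by simpa using hPY.1) hv (by simp [hv'])
  have hXtop : ⨆ i, hX.eigenvalues i = 1 :=
    le_antisymm (hX.le_algebraMap_iff.1 (by simpa using hP.le_one))
      (hYtop ▸ iSup_eigenvalues_krausMap_le hunital hX hY)
  have hXbot : ⨅ i, hX.eigenvalues i = 0 :=
    le_antisymm (hYbot ▸ iInf_eigenvalues_le_iInf_krausMap hunital hX hY)
      (hX.algebraMap_le_iff.1 (by simpa using hP.nonneg))
  exact ⟨P, hX, hY, by simp [hXtop, hXbot], by simp [hXtop, hXbot, hYtop, hYbot]⟩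

end Orthogonal

section Extremal

variable {V : κ → Matrix ι ι ℂ}

variable (V) in
def krausGap (X : Matrix ι ι ℂ) (p q : EuclideanSpace ℂ ι) : ℝ :=
  (star p.ofLp ⬝ᵥ krausMap V X *ᵥ p.ofLp).re - (star q.ofLp ⬝ᵥ krausMap V X *ᵥ q.ofLp).re

lemma continuous_krausGap :
    Continuous fun t : Matrix ι ι ℂ × EuclideanSpace ℂ ι × EuclideanSpace ℂ ι =>
      krausGap V t.1 t.2.1 t.2.2 := by
  have := (krausMap V).continuous_of_finiteDimensional
  unfold krausGap
  fun_prop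

-- With the L2 operator norm, matrices form a C⋆-algebra carrying the usual topology, and there
-- `[0, 1]` lies in the closed unit ball.
lemma isCompact_Icc_zero_one [DecidableEq ι] : IsCompact (Set.Icc (0 : Matrix ι ι ℂ) 1) := by
  open scoped Matrix.Norms.L2Operator in
  exact (isCompact_closedBall (0 : Matrix ι ι ℂ) 1).of_isClosed_subset isClosed_Icc
    fun X hX => by simpa using (CStarAlgebra.mem_Icc_iff_norm_le_one.1 hX).2

variable [DecidableEq ι]

lemma re_dotProduct_krausMap_mulVec_mem_Icc (hunital : ∑ i, (V i)ᴴ * V i = 1)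
    {X : Matrix ι ι ℂ} (hX : X ∈ Set.Icc 0 1) {p : EuclideanSpace ℂ ι} (hp : ‖p‖ = 1) :
    (star p.ofLp ⬝ᵥ krausMap V X *ᵥ p.ofLp).re ∈ Set.Icc 0 1 := by
  have hY := krausMap_mem_Icc hunital hX
  have hle := re_dotProduct_mulVec_le_of_le_algebraMap (r := 1) (by simpa using hY.2) p.ofLp
  rw [star_ofLp_dotProduct_ofLp, hp] at hle
  exact ⟨by simpa using (Matrix.nonneg_iff_posSemidef.1 hY.1).re_dotProduct_nonneg p.ofLp,
    by simpa using hle⟩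

lemma krausGap_le_one (hunital : ∑ i, (V i)ᴴ * V i = 1) {X : Matrix ι ι ℂ}
    (hX : X ∈ Set.Icc 0 1) {p q : EuclideanSpace ℂ ι} (hp : ‖p‖ = 1) (hq : ‖q‖ = 1) :
    krausGap V X p q ≤ 1 := by
  have hp' := re_dotProduct_krausMap_mulVec_mem_Icc hunital hX hp
  have hq' := re_dotProduct_krausMap_mulVec_mem_Icc hunital hX hq
  unfold krausGap
  linarith [hp'.2, hq'.1]

lemma star_mulVec_dotProduct_mulVec_eq_zero_of_krausGap_eq_one
    (hunital : ∑ i, (V i)ᴴ * V i = 1) {X : Matrix ι ι ℂ} (hX : X ∈ Set.Icc 0 1)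
    {p q : EuclideanSpace ℂ ι} (hp : ‖p‖ = 1) (hq : ‖q‖ = 1) (h : krausGap V X p q = 1)
    (i j : κ) : star (V i *ᵥ p.ofLp) ⬝ᵥ V j *ᵥ q.ofLp = 0 := by
  have hX0 : X.PosSemidef := Matrix.nonneg_iff_posSemidef.1 hX.1
  have hp' := re_dotProduct_krausMap_mulVec_mem_Icc hunital hX hp
  have hq' := re_dotProduct_krausMap_mulVec_mem_Icc hunital hX hq
  unfold krausGap at h
  have hp1 : (star p.ofLp ⬝ᵥ krausMap V X *ᵥ p.ofLp).re = 1 := by linarith [hp'.2, hq'.1]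
  have hq0 : (star q.ofLp ⬝ᵥ krausMap V X *ᵥ q.ofLp).re = 0 := by linarith [hp'.2, hq'.1]
  have hfix : X *ᵥ (V i *ᵥ p.ofLp) = V i *ᵥ p.ofLp := by
    have hre : (star p.ofLp ⬝ᵥ krausMap V (1 - X) *ᵥ p.ofLp).re = 0 := by
      rw [map_sub, krausMap_one hunital, sub_mulVec, one_mulVec, dotProduct_sub, Complex.sub_re,
        star_ofLp_dotProduct_ofLp, hp, hp1]
      norm_num
    have := mulVec_eq_zero_of_re_dotProduct_krausMap_eq_zero (Matrix.le_iff.1 hX.2) hre i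
    rwa [sub_mulVec, one_mulVec, sub_eq_zero, eq_comm] at this
  have hker : X *ᵥ (V j *ᵥ q.ofLp) = 0 :=
    mulVec_eq_zero_of_re_dotProduct_krausMap_eq_zero hX0 hq0 j
  rw [← hfix, star_mulVec, ← dotProduct_mulVec, hX0.isHermitian.eq, hker, dotProduct_zero]

lemma exists_krausGap_eq_of_mem_contractionRatios (hunital : ∑ i, (V i)ᴴ * V i = 1) {r : ℝ}
    (hr : r ∈ contractionRatios V) :
    ∃ X ∈ Set.Icc (0 : Matrix ι ι ℂ) 1, ∃ p q : EuclideanSpace ℂ ι,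
      ‖p‖ = 1 ∧ ‖q‖ = 1 ∧ krausGap V X p q = r := by
  have := nonempty_of_mem_contractionRatios hr
  obtain ⟨X, hX, hY, hne, rfl⟩ := hr
  set M := ⨆ i, hX.eigenvalues i
  set m := ⨅ i, hX.eigenvalues i
  have hd : 0 < M - m := sub_pos.2 <|
    (ciInf_le_ciSup (Set.finite_range _).bddBelow (Set.finite_range _).bddAbove).lt_of_ne hne.symm
  have hc : 0 ≤ (M - m)⁻¹ := inv_nonneg.2 hd.le
  refine ⟨(M - m)⁻¹ • (X - algebraMap ℝ _ m), ⟨?_, ?_⟩, ?_⟩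
  · exact smul_nonneg hc (sub_nonneg.2 (hX.algebraMap_le_iff.2 le_rfl))
  · calc (M - m)⁻¹ • (X - algebraMap ℝ _ m)
        ≤ (M - m)⁻¹ • (algebraMap ℝ _ M - algebraMap ℝ _ m) :=
          smul_le_smul_of_nonneg_left (sub_le_sub_right (hX.le_algebraMap_iff.2 le_rfl) _) hc
      _ = 1 := by rw [← map_sub, Algebra.smul_def, ← map_mul, inv_mul_cancel₀ hd.ne', map_one]
  · obtain ⟨p, hp, hpY⟩ := hY.exists_re_dotProduct_mulVec_eq_iSup
    obtain ⟨q, hq, hqY⟩ := hY.exists_re_dotProduct_mulVec_eq_iInf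
    refine ⟨p, q, hp, hq, ?_⟩
    simp only [krausGap, LinearMap.map_smul_of_tower, map_sub, krausMap_algebraMap hunital,
      smul_mulVec, sub_mulVec, algebraMap_mulVec, dotProduct_smul, dotProduct_sub,
      star_ofLp_dotProduct_ofLp, hp, hq, Complex.smul_re, Complex.sub_re, hpY, hqY]
    simp only [smul_eq_mul]
    ring

lemma exists_orthogonal_of_sSup_contractionRatios_eq_one (hunital : ∑ i, (V i)ᴴ * V i = 1)
    (h : sSup (contractionRatios V) = 1) :
    ∃ u v : ι → ℂ, u ≠ 0 ∧ v ≠ 0 ∧ ∀ i j, star (V i *ᵥ u) ⬝ᵥ V j *ᵥ v = 0 := by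
  have hS : (contractionRatios V).Nonempty :=
    Set.nonempty_iff_ne_empty.2 fun hS => by simp [hS] at h
  have := nonempty_of_mem_contractionRatios hS.some_mem
  have hsphere : (Metric.sphere (0 : EuclideanSpace ℂ ι) 1).Nonempty :=
    NormedSpace.sphere_nonempty.2 zero_le_one
  have hsphere_compact := isCompact_sphere (0 : EuclideanSpace ℂ ι) 1
  have hC := (isCompact_Icc_zero_one (ι := ι)).prod (hsphere_compact.prod hsphere_compact)
  obtain ⟨⟨X, p, q⟩, ⟨hX, hp, hq⟩, hmax⟩ := hC.exists_isMaxOn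
    ((Set.nonempty_Icc.2 zero_le_one).prod (hsphere.prod hsphere))
    (continuous_krausGap (V := V)).continuousOn
  rw [mem_sphere_zero_iff_norm] at hp hq
  have hgap : krausGap V X p q = 1 := by
    refine le_antisymm (krausGap_le_one hunital hX hp hq) (h ▸ csSup_le hS fun r hr => ?_)
    obtain ⟨X', hX', p', q', hp', hq', rfl⟩ :=
      exists_krausGap_eq_of_mem_contractionRatios hunital hr
    exact isMaxOn_iff.1 hmax (X', p', q')
      ⟨hX', mem_sphere_zero_iff_norm.2 hp', mem_sphere_zero_iff_norm.2 hq'⟩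
  have ofLp_ne_zero {x : EuclideanSpace ℂ ι} (hx : ‖x‖ = 1) : x.ofLp ≠ 0 := by
    rw [Ne, WithLp.ofLp_eq_zero, ← norm_eq_zero, hx]
    exact one_ne_zero
  exact ⟨p.ofLp, q.ofLp, ofLp_ne_zero hp, ofLp_ne_zero hq,
    star_mulVec_dotProduct_mulVec_eq_zero_of_krausGap_eq_one hunital hX hp hq hgap⟩

end Extremal

lemma sSup_contractionRatios_eq_one_of_orthogonal [DecidableEq ι] {V : κ → Matrix ι ι ℂ}
    (hunital : ∑ i, (V i)ᴴ * V i = 1) {u v : ι → ℂ} (hu : u ≠ 0) (hv : v ≠ 0)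
    (horth : ∀ i j, star (V i *ᵥ u) ⬝ᵥ V j *ᵥ v = 0) : sSup (contractionRatios V) = 1 := by
  have : Nonempty ι := ⟨(Function.ne_iff.1 hu).choose⟩
  exact IsGreatest.csSup_eq ⟨one_mem_contractionRatios hunital hu hv horth,
    fun _ => le_one_of_mem_contractionRatios hunital⟩

end

theorem stmt19_general (n m : ℕ) (V : Fin m → Matrix (Fin n) (Fin n) ℂ)
    (hunital : ∑ i, (V i)ᴴ * V i = 1) :
    (sSup {r : ℝ | ∃ (X : Matrix (Fin n) (Fin n) ℂ) (hX : X.IsHermitian)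
          (hY : (∑ i, (V i)ᴴ * X * V i).IsHermitian),
        (⨆ i, hX.eigenvalues i) ≠ (⨅ i, hX.eigenvalues i) ∧
        r = ((⨆ i, hY.eigenvalues i) - ⨅ i, hY.eigenvalues i) /
            ((⨆ i, hX.eigenvalues i) - ⨅ i, hX.eigenvalues i)} = 1
      ↔ ∃ u v : Fin n → ℂ, u ≠ 0 ∧ v ≠ 0 ∧
          ∀ i j, star (Matrix.mulVec (V i) u) ⬝ᵥ Matrix.mulVec (V j) v = 0) := by
  change sSup (contractionRatios V) = 1 ↔ _
  exact ⟨exists_orthogonal_of_sSup_contractionRatios_eq_one hunital,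
    fun ⟨u, v, hu, hv, horth⟩ => sSup_contractionRatios_eq_one_of_orthogonal hunital hu hv horth⟩

/-- The contraction rate (in the spectral-diameter seminorm) of a completely positive
unital map equals `1` iff there exist nonzero vectors `u, v` with
`⟨V_i u, V_j v⟩ = 0` for all `i, j`. -/
theorem stmt19 (n m : ℕ) (hn : 0 < n) (V : Fin m → Matrix (Fin n) (Fin n) ℂ)
    (hunital : ∑ i, (V i)ᴴ * V i = 1) :
    (sSup {r : ℝ | ∃ (X : Matrix (Fin n) (Fin n) ℂ) (hX : X.IsHermitian)
          (hY : (∑ i, (V i)ᴴ * X * V i).IsHermitian),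
        (⨆ i, hX.eigenvalues i) ≠ (⨅ i, hX.eigenvalues i) ∧
        r = ((⨆ i, hY.eigenvalues i) - ⨅ i, hY.eigenvalues i) /
            ((⨆ i, hX.eigenvalues i) - ⨅ i, hX.eigenvalues i)} = 1
      ↔ ∃ u v : Fin n → ℂ, u ≠ 0 ∧ v ≠ 0 ∧
          ∀ i j, star (Matrix.mulVec (V i) u) ⬝ᵥ Matrix.mulVec (V j) v = 0) :=
  stmt19_general n m V hunital
end
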